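/- Let A₁ be Hermitian negative semidefinite and A₂ Hermitian negative semidefinite, and h > 0. Then ‖e^{(A₁+A₂)h} − e^{A₁ h/2} e^{A₂ h} e^{A₁ h/2}‖ ≤ h³ ( (1/6)‖[[A₂,A₁],A₁]‖ + (1/4)‖[A₂,A₁]‖‖A₂‖ + (1/3)‖A₂‖³ ). -/

import Mathlib

/-!
Write `S(s) = e^{sA₁/2} e^{sA₂} e^{sA₁/2}` and `H = A₁ + A₂`. Since all exponentials involved are
contractions, differentiating `s ↦ e^{(h-s)H} S(s)` bounds the error by `∫₀ʰ ‖S'(s) - H S(s)‖ ds`.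
As `e^{sA₁/2}` commutes with `A₁`, the defect `S' - H S` splits into second-order remainders of
`[e^{τA}, B] = τ [A, B] e^{τA} + O(τ²)` and `s` times a commutator `[e^{τA}, C] = O(τ)`; both
estimates come from `d/du (e^{uA} B e^{(t-u)A}) = e^{uA} [A, B] e^{(t-u)A}`. The defect is thus
`O(s²)` with double commutators as constants, and integration gives the `h³` bound. Negative
semidefinite matrices generate contractions by the continuous functional calculus.
-/

open scoped Matrix.Norms.L2Operator ComplexOrder
open NormedSpace

open Set in
theorem norm_sub_le_of_norm_deriv_le_mul_pow {E : Type*} [NormedAddCommGroup E] [NormedSpace ℝ E]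
    {f f' : ℝ → E} {c t : ℝ} (k : ℕ) (ht : 0 ≤ t)
    (hf : ∀ s ∈ Icc 0 t, HasDerivAt f (f' s) s) (bound : ∀ s ∈ Ico 0 t, ‖f' s‖ ≤ c * s ^ k) :
    ‖f t - f 0‖ ≤ c * t ^ (k + 1) / (k + 1) := by
  have hB (s : ℝ) : HasDerivAt (fun s => c * s ^ (k + 1) / (k + 1)) (c * s ^ k) s := by
    refine (((hasDerivAt_pow (k + 1) s).const_mul c).div_const ((k : ℝ) + 1)).congr_deriv ?_
    push_cast [Nat.add_sub_cancel]
    field_simp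
  exact image_norm_le_of_norm_deriv_right_le_deriv_boundary (f := fun s => f s - f 0)
    (fun s hs => ((hf s hs).sub_const _).continuousAt.continuousWithinAt)
    (fun s hs => ((hf s (Ico_subset_Icc_self hs)).sub_const _).hasDerivWithinAt)
    (by simp) hB bound ⟨ht, le_rfl⟩

-- Each term is `O(s²)`: the first-order parts left over from the first two make up the third.
theorem strang_defect_eq {R : Type*} [Ring R] [Algebra ℝ R] {P Q A₁ A₂ : R} (hP : Commute P A₁)
    (s : ℝ) :
    (1 / 2 : ℝ) • (A₁ * (P * Q * P)) + P * A₂ * Q * P + (1 / 2 : ℝ) • (P * Q * P * A₁)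
        - (A₁ + A₂) * (P * Q * P)
      = (⁅P, A₂⁆ - (s / 2) • (⁅A₁, A₂⁆ * P)) * (Q * P)
        + (1 / 2 : ℝ) • (P * (⁅Q, A₁⁆ - s • (⁅A₂, A₁⁆ * Q)) * P)
        + (s / 2) • (⁅P, ⁅A₂, A₁⁆⁆ * (Q * P)) := by
  have hP' (X : R) : A₁ * (P * X) = P * (A₁ * X) := by rw [← mul_assoc, ← hP.eq, mul_assoc]
  simp only [Ring.lie_def, mul_sub, sub_mul, add_mul, smul_sub, smul_mul_assoc, mul_smul_comm,
    mul_assoc, hP', hP.eq]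
  module

section BanachAlgebra

variable {𝔸 : Type*} [NormedRing 𝔸] [NormedAlgebra ℝ 𝔸] [CompleteSpace 𝔸]

def IsContractionGenerator (A : 𝔸) : Prop :=
  ∀ t : ℝ, 0 ≤ t → ‖exp (t • A)‖ ≤ 1

theorem exp_add_smul (A : 𝔸) (s t : ℝ) : exp ((s + t) • A) = exp (s • A) * exp (t • A) := by
  have hball (x : 𝔸) : x ∈ Metric.eball (0 : 𝔸) (expSeries ℝ 𝔸).radius :=
    (expSeries_radius_eq_top ℝ 𝔸).symm ▸ edist_lt_top _ _
  rw [add_smul, exp_add_of_commute_of_mem_ball (((Commute.refl A).smul_left s).smul_right t)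
    (hball _) (hball _)]

theorem hasDerivAt_exp_smul_mul_mul_exp_sub_smul (A B : 𝔸) (t u : ℝ) :
    HasDerivAt (fun u : ℝ => exp (u • A) * B * exp ((t - u) • A))
      (exp (u • A) * ⁅A, B⁆ * exp ((t - u) • A)) u := by
  have hrev : HasDerivAt (fun u : ℝ => exp ((t - u) • A)) ((-1 : ℝ) • (A * exp ((t - u) • A))) u :=
    (hasDerivAt_exp_smul_const' A (t - u)).scomp u ((hasDerivAt_id u).const_sub t)
  refine (((hasDerivAt_exp_smul_const A u).mul_const B).mul hrev).congr_deriv ?_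
  simp only [Ring.lie_def, neg_smul, one_smul]
  noncomm_ring

theorem hasDerivAt_exp_sub_smul_mul {F : ℝ → 𝔸} {F' : 𝔸} {s : ℝ} (hF : HasDerivAt F F' s)
    (H : 𝔸) (h : ℝ) :
    HasDerivAt (fun s => exp ((h - s) • H) * F s) (exp ((h - s) • H) * (F' - H * F s)) s := by
  have hrev : HasDerivAt (fun s : ℝ => exp ((h - s) • H)) ((-1 : ℝ) • (exp ((h - s) • H) * H)) s :=
    (hasDerivAt_exp_smul_const H (h - s)).scomp s ((hasDerivAt_id s).const_sub h)
  refine (hrev.mul hF).congr_deriv ?_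
  simp only [neg_smul, one_smul, mul_sub, neg_mul, mul_assoc]
  abel

namespace IsContractionGenerator

variable {A : 𝔸} (hA : IsContractionGenerator A)
include hA

theorem norm_lie_exp_smul_le (B : 𝔸) {t : ℝ} (ht : 0 ≤ t) :
    ‖⁅exp (t • A), B⁆‖ ≤ t * ‖⁅A, B⁆‖ := by
  have key := norm_sub_le_of_norm_deriv_le_mul_pow 0 ht
    (fun u _ => hasDerivAt_exp_smul_mul_mul_exp_sub_smul A B t u) fun u hu => by
      simpa [mul_comm] using norm_mul_le_of_le (norm_mul_le_of_le (hA u hu.1) le_rfl)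
        (hA (t - u) (sub_nonneg.2 hu.2.le))
  simpa [Ring.lie_def, mul_comm] using key

theorem norm_lie_exp_smul_sub_le (B : 𝔸) {t : ℝ} (ht : 0 ≤ t) :
    ‖⁅exp (t • A), B⁆ - t • (⁅A, B⁆ * exp (t • A))‖ ≤ t ^ 2 / 2 * ‖⁅A, ⁅A, B⁆⁆‖ := by
  have hderiv (u : ℝ) : HasDerivAt
      (fun u : ℝ => exp (u • A) * B * exp ((t - u) • A) - u • (⁅A, B⁆ * exp (t • A)))
      (exp (u • A) * ⁅A, B⁆ * exp ((t - u) • A) - ⁅A, B⁆ * exp (t • A)) u := by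
    refine ((hasDerivAt_exp_smul_mul_mul_exp_sub_smul A B t u).sub
      ((hasDerivAt_id u).smul_const (⁅A, B⁆ * exp (t • A)))).congr_deriv ?_
    rw [one_smul]
  have hsplit (u : ℝ) : exp (u • A) * ⁅A, B⁆ * exp ((t - u) • A) - ⁅A, B⁆ * exp (t • A)
      = ⁅exp (u • A), ⁅A, B⁆⁆ * exp ((t - u) • A) := by
    rw [← add_sub_cancel u t, add_sub_cancel_left, exp_add_smul]
    simp only [Ring.lie_def]
    noncomm_ring
  have key := norm_sub_le_of_norm_deriv_le_mul_pow 1 ht (fun u _ => hderiv u) fun u hu => by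
    rw [hsplit, pow_one, mul_comm]
    simpa using norm_mul_le_of_le (hA.norm_lie_exp_smul_le ⁅A, B⁆ hu.1)
      (hA (t - u) (sub_nonneg.2 hu.2.le))
  refine (le_of_eq ?_).trans (key.trans_eq ?_)
  · congr 1
    simp only [sub_self, zero_smul, sub_zero, exp_zero, mul_one, one_mul, Ring.lie_def]
    abel
  · push_cast
    ring

end IsContractionGenerator

noncomputable def strangProduct (A₁ A₂ : 𝔸) (s : ℝ) : 𝔸 :=
  exp ((s / 2) • A₁) * exp (s • A₂) * exp ((s / 2) • A₁)

theorem hasDerivAt_strangProduct (A₁ A₂ : 𝔸) (s : ℝ) :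
    HasDerivAt (strangProduct A₁ A₂)
      ((1 / 2 : ℝ) • (A₁ * strangProduct A₁ A₂ s)
        + exp ((s / 2) • A₁) * A₂ * exp (s • A₂) * exp ((s / 2) • A₁)
        + (1 / 2 : ℝ) • (strangProduct A₁ A₂ s * A₁)) s := by
  have hhalf : HasDerivAt (fun s : ℝ => s / 2) (1 / 2) s := (hasDerivAt_id s).div_const 2
  have hP := (hasDerivAt_exp_smul_const' A₁ (s / 2)).scomp s hhalf
  have hP' := (hasDerivAt_exp_smul_const A₁ (s / 2)).scomp s hhalf
  refine ((hP.mul (hasDerivAt_exp_smul_const' A₂ s)).mul hP').congr_deriv ?_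
  simp only [strangProduct, Function.comp_apply, Pi.mul_apply, smul_mul_assoc, mul_smul_comm,
    add_mul, mul_assoc]

theorem norm_strang_defect_le {A₁ A₂ : 𝔸} (h₁ : IsContractionGenerator A₁)
    (h₂ : IsContractionGenerator A₂) {s : ℝ} (hs : 0 ≤ s) :
    ‖(1 / 2 : ℝ) • (A₁ * strangProduct A₁ A₂ s)
        + exp ((s / 2) • A₁) * A₂ * exp (s • A₂) * exp ((s / 2) • A₁)
        + (1 / 2 : ℝ) • (strangProduct A₁ A₂ s * A₁) - (A₁ + A₂) * strangProduct A₁ A₂ s‖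
      ≤ (3 / 8 * ‖⁅A₁, ⁅A₁, A₂⁆⁆‖ + 1 / 4 * ‖⁅A₂, ⁅A₂, A₁⁆⁆‖) * s ^ 2 := by
  have hs2 : 0 ≤ s / 2 := by positivity
  have hPA₁ : Commute (exp ((s / 2) • A₁)) A₁ := ((Commute.refl A₁).smul_left _).exp_left
  rw [strangProduct, strang_defect_eq hPA₁ s]
  have hQP : ‖exp (s • A₂) * exp ((s / 2) • A₁)‖ ≤ 1 := by
    simpa using norm_mul_le_of_le (h₂ s hs) (h₁ _ hs2)
  have hT₁ := norm_mul_le_of_le (h₁.norm_lie_exp_smul_sub_le A₂ hs2) hQP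
  have hT₂ := norm_mul_le_of_le
    (norm_mul_le_of_le (h₁ _ hs2) (h₂.norm_lie_exp_smul_sub_le A₁ hs)) (h₁ _ hs2)
  have hT₃ := norm_mul_le_of_le (h₁.norm_lie_exp_smul_le ⁅A₂, A₁⁆ hs2) hQP
  have hlie₁ : ‖⁅A₁, ⁅A₂, A₁⁆⁆‖ = ‖⁅A₁, ⁅A₁, A₂⁆⁆‖ := by
    rw [← norm_neg]
    congr 1
    simp only [Ring.lie_def]
    noncomm_ring
  rw [hlie₁] at hT₃
  have hT₃' := mul_le_mul_of_nonneg_left hT₃ hs2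
  refine norm_add₃_le.trans ?_
  rw [norm_smul, norm_smul, Real.norm_of_nonneg hs2, Real.norm_of_nonneg (by norm_num)]
  linarith

theorem norm_exp_sub_strangProduct_le {A₁ A₂ : 𝔸} (h₁ : IsContractionGenerator A₁)
    (h₂ : IsContractionGenerator A₂) (h₁₂ : IsContractionGenerator (A₁ + A₂)) {h : ℝ}
    (hh : 0 ≤ h) :
    ‖exp (h • (A₁ + A₂)) - strangProduct A₁ A₂ h‖
      ≤ h ^ 3 * (1 / 8 * ‖⁅A₁, ⁅A₁, A₂⁆⁆‖ + 1 / 12 * ‖⁅A₂, ⁅A₂, A₁⁆⁆‖) := by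
  have key := norm_sub_le_of_norm_deriv_le_mul_pow 2 hh
    (fun s _ => hasDerivAt_exp_sub_smul_mul (hasDerivAt_strangProduct A₁ A₂ s) (A₁ + A₂) h)
    fun s hs => by
      simpa using norm_mul_le_of_le (h₁₂ (h - s) (sub_nonneg.2 hs.2.le))
        (norm_strang_defect_le h₁ h₂ hs.1)
  rw [← norm_neg]
  refine (le_of_eq ?_).trans (key.trans_eq ?_)
  · simp [strangProduct]
  · ring

end BanachAlgebra

theorem norm_exp_le_one_of_nonpos {A : Type*} [CStarAlgebra A] [PartialOrder A]
    [StarOrderedRing A] {a : A} (ha : a ≤ 0) : ‖exp a‖ ≤ 1 := by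
  have hsa : IsSelfAdjoint a := by simpa using (IsSelfAdjoint.of_nonneg (neg_nonneg.2 ha)).neg
  rw [← CFC.real_exp_eq_normedSpace_exp hsa]
  refine norm_cfc_le zero_le_one fun x hx => ?_
  have hx0 : x ≤ 0 := (cfc_nonpos_iff id a).1 (by rwa [cfc_id ℝ a]) x hx
  rw [Real.norm_of_nonneg (Real.exp_nonneg x)]
  exact Real.exp_le_one_iff.2 hx0

theorem IsContractionGenerator.of_nonpos {A : Type*} [CStarAlgebra A] [PartialOrder A]
    [StarOrderedRing A] {a : A} (ha : a ≤ 0) : IsContractionGenerator a :=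
  fun _ ht => norm_exp_le_one_of_nonpos (smul_nonpos_of_nonneg_of_nonpos ht ha)

open scoped MatrixOrder in
theorem Matrix.isContractionGenerator_of_posSemidef_neg {n : Type*} [Fintype n] [DecidableEq n]
    {A : Matrix n n ℂ} (hA : (-A).PosSemidef) : IsContractionGenerator A :=
  .of_nonpos (neg_nonneg.1 hA.nonneg)

theorem stmt_11_general {n : Type*} [Fintype n] [DecidableEq n]
    (A₁ A₂ : Matrix n n ℂ)
    (hA₁neg : (-A₁).PosSemidef)
    (hA₂neg : (-A₂).PosSemidef)
    (h : ℝ) (hh : 0 < h) :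
    ‖exp (h • (A₁ + A₂)) - exp ((h/2) • A₁) * exp (h • A₂) * exp ((h/2) • A₁)‖ ≤
      h ^ 3 * ((1/6) * ‖(A₂ * A₁ - A₁ * A₂) * A₁ - A₁ * (A₂ * A₁ - A₁ * A₂)‖
        + (1/4) * ‖A₂ * A₁ - A₁ * A₂‖ * ‖A₂‖ + (1/3) * ‖A₂‖ ^ 3) := by
  have hsum : (-(A₁ + A₂)).PosSemidef := by rw [neg_add]; exact hA₁neg.add hA₂neg
  have hstrang := norm_exp_sub_strangProduct_le
    (Matrix.isContractionGenerator_of_posSemidef_neg hA₁neg)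
    (Matrix.isContractionGenerator_of_posSemidef_neg hA₂neg)
    (Matrix.isContractionGenerator_of_posSemidef_neg hsum) hh.le
  have hlie₁ : ⁅A₁, ⁅A₁, A₂⁆⁆ = (A₂ * A₁ - A₁ * A₂) * A₁ - A₁ * (A₂ * A₁ - A₁ * A₂) := by
    simp only [Ring.lie_def]
    noncomm_ring
  have hlie₂ : ‖⁅A₂, ⁅A₂, A₁⁆⁆‖ ≤ 2 * ‖A₂ * A₁ - A₁ * A₂‖ * ‖A₂‖ := by
    simp only [Ring.lie_def]
    refine (norm_sub_le _ _).trans ?_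
    linarith [norm_mul_le A₂ (A₂ * A₁ - A₁ * A₂), norm_mul_le (A₂ * A₁ - A₁ * A₂) A₂]
  rw [hlie₁] at hstrang
  refine hstrang.trans (mul_le_mul_of_nonneg_left ?_ (by positivity))
  linarith [norm_nonneg ((A₂ * A₁ - A₁ * A₂) * A₁ - A₁ * (A₂ * A₁ - A₁ * A₂)),
    mul_nonneg (norm_nonneg (A₂ * A₁ - A₁ * A₂)) (norm_nonneg A₂), pow_nonneg (norm_nonneg A₂) 3]

/-- Local second-order Trotter (Strang splitting) error bound with commutator
scaling for dissipative dynamics. -/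
theorem stmt_11 {n : Type*} [Fintype n] [DecidableEq n]
    (A₁ A₂ : Matrix n n ℂ)
    (hA₁ : A₁.IsHermitian) (hA₁neg : (-A₁).PosSemidef)
    (hA₂ : A₂.IsHermitian) (hA₂neg : (-A₂).PosSemidef)
    (h : ℝ) (hh : 0 < h) :
    ‖exp (h • (A₁ + A₂)) - exp ((h/2) • A₁) * exp (h • A₂) * exp ((h/2) • A₁)‖ ≤
      h ^ 3 * ((1/6) * ‖(A₂ * A₁ - A₁ * A₂) * A₁ - A₁ * (A₂ * A₁ - A₁ * A₂)‖
        + (1/4) * ‖A₂ * A₁ - A₁ * A₂‖ * ‖A₂‖ + (1/3) * ‖A₂‖ ^ 3) :=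
  stmt_11_general A₁ A₂ hA₁neg hA₂neg h hh
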